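/- There exists a strictly decreasing sequence (x_n)_{n∈ℕ} in (0,1] converging to 0 such that the compact set X = {0} ∪ {x_n : n ∈ ℕ} is a weak IFS attractor on [0,1] but is not an IFS attractor on [0,1]; in particular A_w[0,1] \ A[0,1] is nonempty. -/

import Mathlib

open Metric Set Filter Topology

/-- `f` is a contraction of the set `S`: it maps `S` into `S` and is Lipschitz on `S`
with some constant `L < 1`. -/
def IsContractionOn {X : Type*} [MetricSpace X] (f : X → X) (S : Set X) : Prop :=
  Set.MapsTo f S S ∧ ∃ L : ℝ, 0 ≤ L ∧ L < 1 ∧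
    ∀ x ∈ S, ∀ y ∈ S, dist (f x) (f y) ≤ L * dist x y

/-- `f` is a weak contraction of the set `S`: it maps `S` into `S` and strictly decreases
distances of distinct points of `S`. -/
def IsWeakContractionOn {X : Type*} [MetricSpace X] (f : X → X) (S : Set X) : Prop :=
  Set.MapsTo f S S ∧ ∀ x ∈ S, ∀ y ∈ S, x ≠ y → dist (f x) (f y) < dist x y

/-- `A` is an attractor of an iterated function system acting on `S`. -/
def IsIFSAttractorOn {X : Type*} [MetricSpace X] (A S : Set X) : Prop :=
  A.Nonempty ∧ IsCompact A ∧ A ⊆ S ∧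
    ∃ (n : ℕ) (f : Fin (n + 1) → X → X),
      (∀ i, IsContractionOn (f i) S) ∧ A = ⋃ i, f i '' A

/-- `A` is an attractor of a weak iterated function system acting on `S`. -/
def IsWeakIFSAttractorOn {X : Type*} [MetricSpace X] (A S : Set X) : Prop :=
  A.Nonempty ∧ IsCompact A ∧ A ⊆ S ∧
    ∃ (n : ℕ) (f : Fin (n + 1) → X → X),
      (∀ i, IsWeakContractionOn (f i) S) ∧ A = ⋃ i, f i '' A

noncomputable def xseq (n : ℕ) : ℝ := (Real.log (n + Real.exp 1))⁻¹

noncomputable def f0 (u : ℝ) : ℝ :=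
  if u = 0 then 0 else (Real.log (Real.exp u⁻¹ + 1))⁻¹

lemma xseq_base (n : ℕ) : (1:ℝ) < (n:ℝ) + Real.exp 1 := by
  have := Real.exp_one_gt_d9
  have : (2.7:ℝ) < Real.exp 1 := by linarith
  have hn : (0:ℝ) ≤ n := Nat.cast_nonneg n
  linarith

lemma xseq_log_ge (n : ℕ) : 1 ≤ Real.log ((n:ℝ) + Real.exp 1) := by
  have h : Real.exp 1 ≤ (n:ℝ) + Real.exp 1 := by
    have : (0:ℝ) ≤ n := Nat.cast_nonneg n
    linarith
  calc (1:ℝ) = Real.log (Real.exp 1) := (Real.log_exp 1).symm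
    _ ≤ Real.log ((n:ℝ) + Real.exp 1) := Real.log_le_log (Real.exp_pos 1) h

lemma xseq_log_pos (n : ℕ) : 0 < Real.log ((n:ℝ) + Real.exp 1) :=
  lt_of_lt_of_le one_pos (xseq_log_ge n)

lemma xseq_pos (n : ℕ) : 0 < xseq n := inv_pos.mpr (xseq_log_pos n)

lemma xseq_le_one (n : ℕ) : xseq n ≤ 1 := by
  have h := xseq_log_ge n
  have := xseq_log_pos n
  rw [xseq]
  exact inv_le_one_of_one_le₀ h

lemma xseq_strictAnti : StrictAnti xseq := by
  intro a b hab
  rw [xseq, xseq]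
  apply inv_strictAnti₀ (xseq_log_pos a)
  apply Real.log_lt_log (by linarith [xseq_base a])
  have : (a:ℝ) < b := by exact_mod_cast hab
  linarith

lemma xseq_tendsto : Tendsto xseq atTop (𝓝 0) := by
  apply Filter.Tendsto.inv_tendsto_atTop
  apply Real.tendsto_log_atTop.comp
  apply Filter.tendsto_atTop_add_const_right
  exact tendsto_natCast_atTop_atTop

lemma f0_xseq (n : ℕ) : f0 (xseq n) = xseq (n + 1) := by
  have hne : xseq n ≠ 0 := (xseq_pos n).ne'
  rw [f0, if_neg hne, xseq, xseq, inv_inv,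
    Real.exp_log (by linarith [xseq_base n])]
  push_cast
  ring_nf

noncomputable def f0d (u : ℝ) : ℝ :=
  (u ^ 2)⁻¹ * Real.exp u⁻¹ / ((Real.exp u⁻¹ + 1) * Real.log (Real.exp u⁻¹ + 1) ^ 2)

lemma expinv_pos (u : ℝ) : (0:ℝ) < Real.exp u⁻¹ + 1 := by positivity

lemma loginv_pos {u : ℝ} (hu : 0 < u) : 0 < Real.log (Real.exp u⁻¹ + 1) := by
  apply Real.log_pos
  linarith [Real.exp_pos u⁻¹]

lemma loginv_gt {u : ℝ} (hu : 0 < u) : u⁻¹ < Real.log (Real.exp u⁻¹ + 1) := by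
  have h1 : Real.exp u⁻¹ < Real.exp u⁻¹ + 1 := by linarith
  calc u⁻¹ = Real.log (Real.exp u⁻¹) := (Real.log_exp _).symm
    _ < Real.log (Real.exp u⁻¹ + 1) := Real.log_lt_log (Real.exp_pos _) h1

lemma f0_hasDerivAt {u : ℝ} (hu : 0 < u) : HasDerivAt f0 (f0d u) u := by
  have hne : u ≠ 0 := hu.ne'
  have hA : Real.exp u⁻¹ + 1 ≠ 0 := (expinv_pos u).ne'
  have hlA : Real.log (Real.exp u⁻¹ + 1) ≠ 0 := (loginv_pos hu).ne'
  have h1 : HasDerivAt (fun v : ℝ => v⁻¹) (-(u ^ 2)⁻¹) u := hasDerivAt_inv hne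
  have h2 : HasDerivAt (fun v : ℝ => Real.exp v⁻¹ + 1)
      (Real.exp u⁻¹ * -(u ^ 2)⁻¹) u := (h1.exp).add_const 1
  have h3 : HasDerivAt (fun v : ℝ => Real.log (Real.exp v⁻¹ + 1))
      (Real.exp u⁻¹ * -(u ^ 2)⁻¹ / (Real.exp u⁻¹ + 1)) u := h2.log hA
  have h4 := h3.inv hlA
  have heq : (fun v : ℝ => (Real.log (Real.exp v⁻¹ + 1))⁻¹) =ᶠ[𝓝 u] f0 := by
    filter_upwards [eventually_ne_nhds hne] with v hv
    rw [f0, if_neg hv]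
  convert (show HasDerivAt f0 _ u from h4.congr_of_eventuallyEq heq.symm) using 1
  rw [f0d]
  field_simp

lemma f0d_pos {u : ℝ} (hu : 0 < u) : 0 < f0d u := by
  rw [f0d]
  have := expinv_pos u
  have := loginv_pos hu
  positivity

lemma f0d_lt_one {u : ℝ} (hu : 0 < u) : f0d u < 1 := by
  have hA := expinv_pos u
  have hlA := loginv_pos hu
  have hgt := loginv_gt hu
  have hui : 0 < u⁻¹ := inv_pos.mpr hu
  rw [f0d, div_lt_one (by positivity)]
  have h1 : (u ^ 2)⁻¹ * Real.exp u⁻¹ = Real.exp u⁻¹ * (u⁻¹)^2 := by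
    rw [← inv_pow]; ring
  rw [h1]
  have h2 : (u⁻¹)^2 < Real.log (Real.exp u⁻¹ + 1) ^ 2 := by
    apply pow_lt_pow_left₀ hgt hui.le
    norm_num
  have h3 : Real.exp u⁻¹ < Real.exp u⁻¹ + 1 := by linarith
  calc Real.exp u⁻¹ * (u⁻¹)^2 < Real.exp u⁻¹ * Real.log (Real.exp u⁻¹ + 1) ^ 2 := by
        exact mul_lt_mul_of_pos_left h2 (Real.exp_pos _)
    _ < (Real.exp u⁻¹ + 1) * Real.log (Real.exp u⁻¹ + 1) ^ 2 := by
        exact mul_lt_mul_of_pos_right h3 (by positivity)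

lemma f0_lt_self {u : ℝ} (hu : 0 < u) : f0 u < u := by
  rw [f0, if_neg hu.ne']
  have h := loginv_gt hu
  have := loginv_pos hu
  calc (Real.log (Real.exp u⁻¹ + 1))⁻¹ < (u⁻¹)⁻¹ := by
        exact inv_strictAnti₀ (inv_pos.mpr hu) h
    _ = u := inv_inv u

lemma f0_pos {u : ℝ} (hu : 0 < u) : 0 < f0 u := by
  rw [f0, if_neg hu.ne']
  exact inv_pos.mpr (loginv_pos hu)

lemma f0_weak {a b : ℝ} (ha : 0 < a) (hab : a < b) : |f0 b - f0 a| < b - a := by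
  have hcont : ContinuousOn f0 (Set.Icc a b) := by
    intro v hv
    exact (f0_hasDerivAt (lt_of_lt_of_le ha hv.1)).continuousAt.continuousWithinAt
  have hderiv : ∀ v ∈ Set.Ioo a b, HasDerivAt f0 (f0d v) v := fun v hv =>
    f0_hasDerivAt (lt_trans ha hv.1)
  obtain ⟨c, hc, hceq⟩ := exists_hasDerivAt_eq_slope f0 f0d hab hcont hderiv
  have hc0 : 0 < c := lt_trans ha hc.1
  have h1 : f0 b - f0 a = f0d c * (b - a) := by
    rw [hceq, div_mul_cancel₀ _ (sub_ne_zero.mpr hab.ne')]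
  rw [h1, abs_of_pos (by nlinarith [f0d_pos hc0])]
  nlinarith [f0d_lt_one hc0, f0d_pos hc0]

lemma f0_weak' {a b : ℝ} (ha : 0 ≤ a) (hab : a < b) : |f0 b - f0 a| < b - a := by
  rcases eq_or_lt_of_le ha with h0 | h0
  · have hz : f0 a = 0 := by rw [← h0]; simp [f0]
    rw [hz, sub_zero, abs_of_pos (f0_pos (h0 ▸ hab))]
    have := f0_lt_self (h0 ▸ hab)
    linarith
  · exact f0_weak h0 hab

lemma f0_weakContraction : IsWeakContractionOn f0 (Set.Icc (0:ℝ) 1) := by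
  constructor
  · intro u hu
    rcases eq_or_lt_of_le hu.1 with h | h
    · rw [← h]
      constructor <;> simp [f0]
    · exact ⟨(f0_pos h).le, le_trans (f0_lt_self h).le hu.2⟩
  · intro p hp q hq hpq
    rw [Real.dist_eq, Real.dist_eq]
    rcases lt_or_gt_of_ne hpq with h | h
    · rw [abs_sub_comm, abs_of_neg (by linarith : p - q < 0)]
      have := f0_weak' hp.1 h
      linarith [this]
    · rw [abs_of_pos (by linarith : 0 < p - q)]
      exact f0_weak' hq.1 h

lemma xseq_zero : xseq 0 = 1 := by
  rw [xseq]
  norm_num [Real.log_exp]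

lemma xseq_mem_Icc (n : ℕ) : xseq n ∈ Set.Icc (0:ℝ) 1 := ⟨(xseq_pos n).le, xseq_le_one n⟩

lemma weakAttr : IsWeakIFSAttractorOn ({0} ∪ Set.range xseq) (Set.Icc 0 1) := by
  refine ⟨⟨0, Or.inl rfl⟩, ?_, ?_, 1, ![f0, fun _ => 1], ?_, ?_⟩
  · rw [Set.singleton_union]
    exact xseq_tendsto.isCompact_insert_range
  · rintro a (rfl | ⟨n, rfl⟩)
    · exact ⟨le_refl 0, zero_le_one⟩
    · exact xseq_mem_Icc n
  · intro i
    fin_cases i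
    · exact f0_weakContraction
    · refine ⟨fun u _ => ⟨zero_le_one, le_refl 1⟩, fun p _ q _ hpq => ?_⟩
      show dist (1:ℝ) 1 < dist p q
      rw [dist_self]
      exact dist_pos.mpr hpq
  · have h0 : (![f0, fun _ => (1:ℝ)] : Fin 2 → ℝ → ℝ) 0 = f0 := rfl
    have h1 : (![f0, fun _ => (1:ℝ)] : Fin 2 → ℝ → ℝ) 1 = fun _ => (1:ℝ) := rfl
    apply Set.Subset.antisymm
    · rintro a (rfl | ⟨n, rfl⟩)
      · refine Set.mem_iUnion.mpr ⟨0, ?_⟩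
        rw [h0]
        exact ⟨0, Or.inl rfl, by simp [f0]⟩
      · cases n with
        | zero =>
          refine Set.mem_iUnion.mpr ⟨1, ?_⟩
          rw [h1]
          exact ⟨0, Or.inl rfl, xseq_zero.symm⟩
        | succ m =>
          refine Set.mem_iUnion.mpr ⟨0, ?_⟩
          rw [h0]
          exact ⟨xseq m, Or.inr ⟨m, rfl⟩, f0_xseq m⟩
    · intro a ha
      obtain ⟨i, b, hb, hba⟩ := Set.mem_iUnion.mp ha
      fin_cases i
      · replace hba : f0 b = a := hba
        rcases hb with rfl | ⟨n, rfl⟩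
        · left
          rw [← hba]; simp [f0]
        · right
          exact ⟨n + 1, by rw [← hba, f0_xseq n]⟩
      · right
        replace hba : (1:ℝ) = a := hba
        exact ⟨0, by rw [← hba, xseq_zero]⟩

lemma dist_xseq_zero (n : ℕ) : dist (xseq n) 0 = xseq n := by
  rw [Real.dist_eq, sub_zero, abs_of_pos (xseq_pos n)]

lemma notAttr : ¬ IsIFSAttractorOn ({0} ∪ Set.range xseq) (Set.Icc 0 1) := by
  rintro ⟨-, -, -, k, f, hf, hXeq⟩
  set X : Set ℝ := {0} ∪ Set.range xseq with hX
  have h0X : (0:ℝ) ∈ X := Or.inl rfl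
  have hxX : ∀ n, xseq n ∈ X := fun n => Or.inr ⟨n, rfl⟩
  have h0I : (0:ℝ) ∈ Set.Icc (0:ℝ) 1 := ⟨le_refl 0, zero_le_one⟩
  -- a uniform Lipschitz constant
  obtain ⟨L, hL0, hL1, hLip⟩ : ∃ L : ℝ, 0 < L ∧ L < 1 ∧ ∀ i, ∀ p ∈ Set.Icc (0:ℝ) 1,
      ∀ q ∈ Set.Icc (0:ℝ) 1, dist (f i p) (f i q) ≤ L * dist p q := by
    choose Li hLi0 hLi1 hLi using fun i => (hf i).2
    refine ⟨max (1/2) (Finset.univ.sup' Finset.univ_nonempty Li), by positivity, ?_, ?_⟩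
    · apply max_lt (by norm_num)
      rw [Finset.sup'_lt_iff]
      exact fun i _ => hLi1 i
    · intro i p hp q hq
      have h1 : Li i ≤ max (1/2) (Finset.univ.sup' Finset.univ_nonempty Li) :=
        le_trans (Finset.le_sup' Li (Finset.mem_univ i)) (le_max_right _ _)
      exact le_trans (hLi i p hp q hq) (mul_le_mul_of_nonneg_right h1 dist_nonneg)
  -- Step A : maps not fixing 0 cover only finitely many points of the sequence
  have stepA : ∀ i, f i 0 ≠ 0 → Set.Finite {n | xseq n ∈ f i '' X} := by
    intro i hv0
    set v := f i 0 with hv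
    have hvI : v ∈ Set.Icc (0:ℝ) 1 := (hf i).1 h0I
    have hvpos : 0 < v := lt_of_le_of_ne hvI.1 (Ne.symm hv0)
    obtain ⟨n₁, hn₁⟩ : ∃ n₁, ∀ n ≥ n₁, xseq n < v / 2 := by
      have := xseq_tendsto.eventually (gt_mem_nhds (half_pos hvpos))
      exact eventually_atTop.mp this
    obtain ⟨K, hK⟩ : ∃ K, ∀ m ≥ K, L * xseq m < v / 2 := by
      have h1 : Tendsto (fun m => L * xseq m) atTop (𝓝 (L * 0)) := xseq_tendsto.const_mul L
      rw [mul_zero] at h1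
      exact eventually_atTop.mp (h1.eventually (gt_mem_nhds (half_pos hvpos)))
    have hGfin : (xseq ⁻¹' (f i '' (xseq '' Set.Iic K))).Finite := by
      apply Set.Finite.preimage (Set.injOn_of_injective xseq_strictAnti.injective)
      exact ((Set.finite_Iic K).image xseq).image (f i)
    apply Set.Finite.subset (hGfin.union (Set.finite_Iic n₁))
    rintro n ⟨a, haX, hfa⟩
    rcases haX with rfl | ⟨m, rfl⟩
    · right
      simp only [Set.mem_Iic]
      by_contra hcon
      push_neg at hcon
      have h1 := hn₁ n hcon.le
      linarith [hfa.le, hfa.ge, hvpos]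
    · rcases le_or_gt m K with hm | hm
      · left
        exact ⟨xseq m, ⟨m, hm, rfl⟩, hfa⟩
      · right
        simp only [Set.mem_Iic]
        by_contra hcon
        push_neg at hcon
        have hd : dist (f i (xseq m)) (f i 0) ≤ L * dist (xseq m) 0 :=
          hLip i (xseq m) (xseq_mem_Icc m) 0 h0I
        rw [hfa, dist_xseq_zero, Real.dist_eq] at hd
        have h2 := hK m hm.le
        have h3 := hn₁ n hcon.le
        have h4 := abs_sub_abs_le_abs_sub (xseq n) v
        rw [abs_of_pos (xseq_pos n), abs_of_pos hvpos] at h4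
        rw [abs_sub_comm] at hd
        have h5 : |v - xseq n| < v / 2 := lt_of_le_of_lt hd h2
        have h6 := abs_lt.mp h5
        linarith [h6.1, h6.2]
  -- Step B : a bound beyond which all coverings come from maps fixing 0
  have hBadfin : (⋃ i, {n | f i 0 ≠ 0 ∧ xseq n ∈ f i '' X}).Finite := by
    apply Set.finite_iUnion
    intro i
    by_cases h : f i 0 = 0
    · convert Set.finite_empty using 2
      ext n
      simp [h]
    · exact (stepA i h).subset fun n hn => hn.2
  obtain ⟨N₀, hN₀⟩ := hBadfin.bddAbove
  simp only [upperBounds, Set.mem_setOf_eq] at hN₀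
  -- Step C : covering of deep points
  have key : ∀ j : ℕ, ∃ (i : Fin (k + 1)) (m : ℕ),
      f i (xseq m) = xseq (j + N₀ + 1) ∧ xseq (j + N₀ + 1) ≤ L * xseq m := by
    intro j
    have hm : xseq (j + N₀ + 1) ∈ ⋃ i, f i '' X := hXeq ▸ hxX (j + N₀ + 1)
    obtain ⟨i, a, haX, hfa⟩ := Set.mem_iUnion.mp hm
    have hi0 : f i 0 = 0 := by
      by_contra h
      have hbad : (j + N₀ + 1) ∈ ⋃ i, {n | f i 0 ≠ 0 ∧ xseq n ∈ f i '' X} :=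
        Set.mem_iUnion.mpr ⟨i, h, ⟨a, haX, hfa⟩⟩
      have := hN₀ hbad
      omega
    rcases haX with rfl | ⟨m, rfl⟩
    · rw [hi0] at hfa
      exact absurd hfa.symm (xseq_pos _).ne'
    · refine ⟨i, m, hfa, ?_⟩
      have hd : dist (f i (xseq m)) (f i 0) ≤ L * dist (xseq m) 0 :=
        hLip i (xseq m) (xseq_mem_Icc m) 0 h0I
      rw [hfa, hi0, dist_xseq_zero, dist_xseq_zero] at hd
      exact hd
  choose I mm hIm hle using key
  -- Step D+E : counting
  have count : ∀ Mn : ℕ, Mn + 1 ≤ (k + 1) * ⌈((Mn + N₀ + 1 : ℕ) + 3 : ℝ) ^ L⌉₊ := by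
    intro Mn
    set M : ℕ := Mn + N₀ + 1 with hM
    set T : ℕ := ⌈((M : ℝ) + 3) ^ L⌉₊ with hT
    have hmap : ∀ j ∈ Finset.range (Mn + 1), (I j, mm j) ∈
        (Finset.univ : Finset (Fin (k + 1))) ×ˢ Finset.range T := by
      intro j hj
      rw [Finset.mem_range] at hj
      refine Finset.mem_product.mpr ⟨Finset.mem_univ _, Finset.mem_range.mpr ?_⟩
      -- bound on mm j
      have hjM : j + N₀ + 1 ≤ M := by omega
      have h1 : xseq M ≤ L * xseq (mm j) :=
        le_trans (xseq_strictAnti.antitone hjM) (hle j)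
      set a : ℝ := Real.log ((M : ℝ) + Real.exp 1) with ha
      set b : ℝ := Real.log ((mm j : ℝ) + Real.exp 1) with hb
      have ha1 : 1 ≤ a := xseq_log_ge M
      have hb0 : 0 < b := xseq_log_pos (mm j)
      have ha0 : 0 < a := lt_of_lt_of_le one_pos ha1
      have h2 : a⁻¹ ≤ L * b⁻¹ := h1
      have h3 : b ≤ L * a := by
        have h4 := mul_le_mul_of_nonneg_right h2 (le_of_lt (mul_pos ha0 hb0))
        calc b = a⁻¹ * (a * b) := by field_simp
          _ ≤ L * b⁻¹ * (a * b) := h4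
          _ = L * a := by field_simp
      have h5 : (mm j : ℝ) + Real.exp 1 ≤ ((M : ℝ) + Real.exp 1) ^ L := by
        calc (mm j : ℝ) + Real.exp 1 = Real.exp b := by
              rw [hb, Real.exp_log (by linarith [xseq_base (mm j)])]
          _ ≤ Real.exp (a * L) := by
              apply Real.exp_le_exp.mpr; rw [mul_comm]; exact h3
          _ = ((M : ℝ) + Real.exp 1) ^ L := (Real.rpow_def_of_pos (by positivity) L).symm
      have h6 : ((M : ℝ) + Real.exp 1) ^ L ≤ ((M : ℝ) + 3) ^ L :=
        Real.rpow_le_rpow (by positivity)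
          (by have := Real.exp_one_lt_d9; linarith) hL0.le
      have h7 : (mm j : ℝ) < ((M : ℝ) + 3) ^ L := by
        have := Real.exp_pos 1
        linarith
      exact Nat.lt_ceil.mpr h7
    have hinj : Set.InjOn (fun j => (I j, mm j)) ↑(Finset.range (Mn + 1)) := by
      intro j _ j' _ hjj
      simp only [Prod.mk.injEq] at hjj
      have h1 : xseq (j + N₀ + 1) = xseq (j' + N₀ + 1) := by
        rw [← hIm j, ← hIm j', hjj.1, hjj.2]
      have := xseq_strictAnti.injective h1
      omega
    have := Finset.card_le_card_of_injOn (fun j => (I j, mm j)) hmap hinj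
    simpa [Finset.card_product] using this
  -- Step F : contradiction by asymptotics
  set c : ℝ := (N₀ : ℝ) + 4 with hc
  have hc1 : 1 ≤ c := by
    rw [hc]
    have : (0:ℝ) ≤ (N₀ : ℝ) := Nat.cast_nonneg _
    linarith
  obtain ⟨R, hR⟩ : ∃ R : ℝ, ∀ u ≥ R, ((k:ℝ) + 1) * c * u ^ (L - 1) < 1 / 2 := by
    have h1 : Tendsto (fun u : ℝ => u ^ (-(1 - L))) atTop (𝓝 0) :=
      tendsto_rpow_neg_atTop (by linarith)
    have h2 : Tendsto (fun u : ℝ => ((k:ℝ) + 1) * c * u ^ (-(1 - L))) atTop (𝓝 (((k:ℝ)+1)*c*0)) :=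
      h1.const_mul _
    rw [mul_zero] at h2
    have h3 := h2.eventually (gt_mem_nhds (by norm_num : (0:ℝ) < 1/2))
    obtain ⟨R, hR⟩ := eventually_atTop.mp h3
    exact ⟨R, fun u hu => by have := hR u hu; rw [show L - 1 = -(1-L) by ring]; exact this⟩
  obtain ⟨Mn, hMn1, hMn2, hMn3⟩ : ∃ Mn : ℕ, (1:ℝ) ≤ Mn ∧ R ≤ Mn ∧ 2 * ((k:ℝ) + 1) < Mn := by
    obtain ⟨Mn, hMn⟩ := exists_nat_ge (max (max 1 R) (2 * ((k:ℝ) + 1) + 1))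
    refine ⟨Mn, ?_, ?_, ?_⟩ <;>
      [exact le_trans (le_trans (le_max_left _ _) (le_max_left _ _)) hMn;
       exact le_trans (le_trans (le_max_right _ _) (le_max_left _ _)) hMn;
       linarith [le_trans (le_max_right _ _) hMn]]
  have hcount := count Mn
  set M : ℕ := Mn + N₀ + 1 with hM
  have hMn0 : (0:ℝ) < Mn := by linarith
  -- real estimate
  have e1 : ((M:ℝ) + 3) ≤ (Mn:ℝ) * c := by
    push_cast [hM, hc]
    nlinarith
  have e2 : ((M:ℝ) + 3) ^ L ≤ (Mn:ℝ) ^ L * c := by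
    calc ((M:ℝ) + 3) ^ L ≤ ((Mn:ℝ) * c) ^ L := by
          apply Real.rpow_le_rpow (by positivity) e1 hL0.le
      _ = (Mn:ℝ) ^ L * c ^ L := Real.mul_rpow hMn0.le (by linarith)
      _ ≤ (Mn:ℝ) ^ L * c := by
          apply mul_le_mul_of_nonneg_left _ (Real.rpow_nonneg hMn0.le L)
          calc c ^ L ≤ c ^ (1:ℝ) := Real.rpow_le_rpow_of_exponent_le hc1 hL1.le
            _ = c := Real.rpow_one c
  have e3 : (Mn:ℝ) ^ L = (Mn:ℝ) ^ (L - 1) * Mn := by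
    rw [← Real.rpow_add_one hMn0.ne' (L - 1)]
    ring_nf
  have e4 : ((k:ℝ) + 1) * ((Mn:ℝ) ^ L * c) < (Mn:ℝ) / 2 := by
    have := hR (Mn:ℝ) hMn2
    rw [e3]
    calc ((k:ℝ) + 1) * ((Mn:ℝ) ^ (L-1) * (Mn:ℝ) * c)
        = (((k:ℝ) + 1) * c * (Mn:ℝ) ^ (L-1)) * (Mn:ℝ) := by ring
      _ < (1/2) * (Mn:ℝ) := by
          apply mul_lt_mul_of_pos_right this hMn0
      _ = (Mn:ℝ) / 2 := by ring
  -- assemble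
  have e5 : (⌈((M : ℝ) + 3) ^ L⌉₊ : ℝ) < ((M:ℝ) + 3) ^ L + 1 :=
    Nat.ceil_lt_add_one (Real.rpow_nonneg (by positivity) L)
  have e6 : ((Mn:ℝ) + 1) ≤ ((k:ℝ) + 1) * (⌈((M : ℝ) + 3) ^ L⌉₊ : ℝ) := by
    exact_mod_cast hcount
  have e7 : ((k:ℝ) + 1) * (((M:ℝ) + 3) ^ L + 1) < Mn / 2 + Mn / 2 := by
    have h8 : ((k:ℝ)+1) * (((M:ℝ)+3)^L) ≤ ((k:ℝ)+1) * ((Mn:ℝ)^L * c) := by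
      apply mul_le_mul_of_nonneg_left e2 (by positivity)
    nlinarith
  have e8 : ((k:ℝ) + 1) * (⌈((M : ℝ) + 3) ^ L⌉₊ : ℝ) ≤ ((k:ℝ)+1) * (((M:ℝ) + 3) ^ L + 1) := by
    apply mul_le_mul_of_nonneg_left e5.le (by positivity)
  linarith

/-- There is a strictly decreasing sequence `(x n)` in `(0,1]` converging to `0` such that
`X = {0} ∪ {x n : n ∈ ℕ}` is a weak IFS attractor on `[0,1]` but not an IFS attractor on
`[0,1]`; in particular `A_w[0,1] \ A[0,1]` is nonempty. -/
theorem exists_weakAttractor_not_attractor :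
    ∃ x : ℕ → ℝ, StrictAnti x ∧ (∀ n, x n ∈ Set.Ioc (0 : ℝ) 1) ∧
      Tendsto x atTop (𝓝 0) ∧
      IsWeakIFSAttractorOn ({0} ∪ Set.range x) (Set.Icc 0 1) ∧
      ¬ IsIFSAttractorOn ({0} ∪ Set.range x) (Set.Icc 0 1) :=
  ⟨xseq, xseq_strictAnti, fun n => ⟨xseq_pos n, xseq_le_one n⟩, xseq_tendsto,
    weakAttr, notAttr⟩
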